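/- Let a, b, c, m, f be real numbers with a + m < 0, am − bc > 0, c ≠ 0, and f² < 2(a+m)(bc−am)/c². Define V(x,y) = (cx − ay)² + (am−bc)y² and LV(x,y) = (ax+by)·V_x + (cx+my)·V_y + (f²y²/2)·V_xx, where subscripts denote partial derivatives. Then LV(x,y) ≤ 0 for all (x,y), with strict inequality when y ≠ 0. -/

import Mathlib

noncomputable def V3 (a b c m : ℝ) : ℝ → ℝ → ℝ :=
  fun x y => (c * x - a * y) ^ 2 + (a * m - b * c) * y ^ 2

noncomputable def LV3 (a b c m f : ℝ) (x y : ℝ) : ℝ :=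
  (a * x + b * y) * deriv (fun x' => V3 a b c m x' y) x
    + (c * x + m * y) * deriv (fun y' => V3 a b c m x y') y
    + f ^ 2 * y ^ 2 / 2 * deriv (deriv (fun x' => V3 a b c m x' y)) x

lemma dVx (a b c m y : ℝ) : deriv (fun x' => V3 a b c m x' y)
    = fun x' => 2 * c ^ 2 * x' - 2 * a * c * y := by
  funext x
  have h := ((((hasDerivAt_id x).const_mul c).sub_const (a * y)).pow 2).add_const
    ((a * m - b * c) * y ^ 2)
  simp only [id] at h
  show deriv (fun x' => (c * x' - a * y) ^ 2 + (a * m - b * c) * y ^ 2) x = _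
  erw [h.deriv]; push_cast; ring

lemma dVy (a b c m x y : ℝ) : deriv (fun y' => V3 a b c m x y') y
    = 2 * (c * x - a * y) * (-a) + (a * m - b * c) * (2 * y) := by
  have h := (((((hasDerivAt_id y).const_mul a).const_sub (c * x)).pow 2).add
    ((((hasDerivAt_id y).pow 2)).const_mul (a * m - b * c)))
  simp only [id] at h
  show deriv (fun y' => (c * x - a * y') ^ 2 + (a * m - b * c) * y' ^ 2) y = _
  erw [h.deriv]; push_cast; ring

lemma LV3_eq (a b c m f x y : ℝ) :
    LV3 a b c m f x y = (2 * (a + m) * (a * m - b * c) + c ^ 2 * f ^ 2) * y ^ 2 := by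
  have h2 : deriv (deriv (fun x' => V3 a b c m x' y)) x = 2 * c ^ 2 := by
    rw [dVx]
    have h : HasDerivAt (fun x' : ℝ => 2 * c ^ 2 * x' - 2 * a * c * y)
        (2 * c ^ 2) x := by
      simpa using ((hasDerivAt_id x).const_mul (2 * c ^ 2)).sub_const (2 * a * c * y)
    rw [h.deriv]
  rw [LV3, h2, dVy]
  simp only [dVx]
  ring

theorem stmt_3 (a b c m f : ℝ) (h1 : a + m < 0) (h2 : a * m - b * c > 0) (h3 : c ≠ 0)
    (h4 : f ^ 2 < 2 * (a + m) * (b * c - a * m) / c ^ 2) :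
    (∀ x y : ℝ, LV3 a b c m f x y ≤ 0) ∧
    (∀ x y : ℝ, y ≠ 0 → LV3 a b c m f x y < 0) := by
  have hc : (0:ℝ) < c ^ 2 := by positivity
  rw [lt_div_iff₀ hc] at h4
  have hcoef : 2 * (a + m) * (a * m - b * c) + c ^ 2 * f ^ 2 < 0 := by nlinarith
  refine ⟨fun x y => ?_, fun x y hy => ?_⟩
  · rw [LV3_eq]; nlinarith [sq_nonneg y]
  · rw [LV3_eq]
    have : 0 < y ^ 2 := by positivity
    nlinarith
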